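/- arXiv:2008.10150 — 5 statements merged into one kernel-verified Lean document; each statement's English description precedes it below -/
import Mathlib

section
/- Suppose X ⟂ Z | H with densities. For every m ≥ 1 there exist functions η: X → R^m and ψ: Z → R^m such that E[(η(X)ᵀψ(Z̃) - g*(X,Z̃))^2] ≤ (1/m)·Var(p_{X|H}(X|H̄) p_{Z|H}(Z̃|H̄) / (p_X(X) p_Z(Z̃))), where (X, Z̃, H̄) ∼ p_X ⊗ p_Z ⊗ p_H are mutually independent and g*(x,z) = p_{X,Z}(x,z)/(p_X(x)p_Z(z)). -/
/-! Draw `H₁, …, H_m` independently from `ρ` and write `F(x, z, h)` for the density ratio, so that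
`g(x, z) = E F(x, z, H)`. For fixed `(x, z)` the sample mean `(1/m) ∑ᵢ F(x, z, Hᵢ)` is unbiased with
variance `Var_ρ F(x, z, ·) / m`; integrating over `(x, z)` (Tonelli) and bounding the average
conditional variance by the total variance, the expected squared error is at most `Var F / m`, so
some realisation of the samples does at least as well. That realisation is an inner product
`η(x)ᵀψ(z)` with `η(x)ᵢ = p_{X|H}(x|Hᵢ) / (m p_X(x))` and `ψ(z)ᵢ = p_{Z|H}(z|Hᵢ) / p_Z(z)`. -/

open MeasureTheory

namespace ProbabilityTheory

variable {ι β : Type*} [Fintype ι] [MeasurableSpace β]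

noncomputable def sampleMean (f : β → ℝ) (v : ι → β) : ℝ := (Fintype.card ι : ℝ)⁻¹ * ∑ i, f (v i)

variable {α : Type*} [MeasurableSpace α] {G : α × β → ℝ}

lemma measurable_sampleMean_sub_integral_sq (ρ : Measure β) [SFinite ρ] (hG : Measurable G) :
    Measurable fun p : (ι → β) × α =>
      (sampleMean (fun b => G (p.2, b)) p.1 - ∫ b, G (p.2, b) ∂ρ) ^ 2 := by
  have hint : Measurable fun a => ∫ b, G (a, b) ∂ρ :=
    hG.stronglyMeasurable.integral_prod_right'.measurable
  refine ((measurable_const.mul (Finset.measurable_sum _ fun i _ => ?_)).sub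
    (hint.comp measurable_snd)).pow_const 2
  exact hG.comp (measurable_snd.prodMk ((measurable_pi_apply i).comp measurable_fst))

variable {ρ : Measure β} [IsProbabilityMeasure ρ] {f : β → ℝ}

lemma memLp_sampleMean (hf : MemLp f 2 ρ) :
    MemLp (sampleMean f : (ι → β) → ℝ) 2 (Measure.pi fun _ => ρ) :=
  (memLp_finsetSum _ fun i _ =>
    hf.comp_measurePreserving (measurePreserving_eval _ i)).const_mul _

lemma integral_sampleMean [Nonempty ι] (hf : Integrable f ρ) :
    ∫ v, sampleMean f v ∂(Measure.pi fun _ : ι => ρ) = ∫ b, f b ∂ρ := by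
  simp only [sampleMean]
  rw [integral_const_mul, integral_finsetSum _ fun i _ => integrable_comp_eval (μ := fun _ => ρ) hf]
  simp only [integral_comp_eval (μ := fun _ => ρ) hf.aestronglyMeasurable, Finset.sum_const,
    Finset.card_univ, nsmul_eq_mul]
  field_simp

lemma variance_sampleMean (hf : MemLp f 2 ρ) :
    Var[sampleMean f; Measure.pi fun _ : ι => ρ] = (Fintype.card ι : ℝ)⁻¹ * Var[f; ρ] := by
  have hsum : Var[fun v : ι → β => ∑ i, f (v i); Measure.pi fun _ => ρ]
      = Fintype.card ι * Var[f; ρ] := by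
    simpa [Finset.sum_fn] using variance_sum_pi (μ := fun _ : ι => ρ) (X := fun _ => f) fun _ => hf
  unfold sampleMean
  rw [variance_const_mul, hsum]
  rcases eq_or_ne (Fintype.card ι : ℝ) 0 with h | h
  · simp [h]
  · field_simp

lemma variance_le_integral_sub_sq (hf : AEStronglyMeasurable f ρ) (c : ℝ) :
    Var[f; ρ] ≤ ∫ b, (f b - c) ^ 2 ∂ρ := by
  rw [← variance_sub_const hf c]
  exact variance_le_expectation_sq (hf.sub aestronglyMeasurable_const)

lemma lintegral_sq_sampleMean_sub_le [Nonempty ι] (hf : MemLp f 2 ρ) (c : ℝ) :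
    ∫⁻ v, ENNReal.ofReal ((sampleMean f v - ∫ b, f b ∂ρ) ^ 2) ∂(Measure.pi fun _ : ι => ρ)
      ≤ ENNReal.ofReal (Fintype.card ι : ℝ)⁻¹ * ∫⁻ b, ENNReal.ofReal ((f b - c) ^ 2) ∂ρ := by
  have hsq : Integrable (fun b => (f b - c) ^ 2) ρ := (hf.sub (memLp_const c)).integrable_sq
  calc _ = evariance (sampleMean f) (Measure.pi fun _ : ι => ρ) := by
        rw [evariance_eq_lintegral_ofReal, integral_sampleMean (hf.integrable one_le_two)]
    _ = ENNReal.ofReal (Fintype.card ι : ℝ)⁻¹ * ENNReal.ofReal Var[f; ρ] := by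
        rw [← (memLp_sampleMean hf).ofReal_variance_eq, variance_sampleMean hf,
          ENNReal.ofReal_mul (by positivity)]
    _ ≤ ENNReal.ofReal (Fintype.card ι : ℝ)⁻¹ * ENNReal.ofReal (∫ b, (f b - c) ^ 2 ∂ρ) := by
        gcongr
        exact variance_le_integral_sub_sq hf.aestronglyMeasurable c
    _ = _ := by rw [ofReal_integral_eq_lintegral_ofReal hsq (ae_of_all _ fun _ => sq_nonneg _)]

variable (ρ) in
lemma exists_lintegral_sq_sampleMean_sub_le [Nonempty ι] (μ : Measure α) [SFinite μ]
    (hG : Measurable G) (hslice : ∀ᵐ a ∂μ, MemLp (fun b => G (a, b)) 2 ρ) (c : ℝ) :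
    ∃ v : ι → β, ∫⁻ a, ENNReal.ofReal ((sampleMean (fun b => G (a, b)) v
        - ∫ b, G (a, b) ∂ρ) ^ 2) ∂μ
      ≤ ENNReal.ofReal (Fintype.card ι : ℝ)⁻¹
          * ∫⁻ q, ENNReal.ofReal ((G q - c) ^ 2) ∂(μ.prod ρ) := by
  have hΦ := ENNReal.measurable_ofReal.comp (measurable_sampleMean_sub_integral_sq (ι := ι) ρ hG)
  obtain ⟨v, hv⟩ := exists_le_lintegral (μ := Measure.pi fun _ : ι => ρ)
    (hΦ.lintegral_prod_right' (ν := μ)).aemeasurable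
  refine ⟨v, hv.trans ?_⟩
  calc _ = ∫⁻ a, ∫⁻ v, ENNReal.ofReal ((sampleMean (fun b => G (a, b)) v
        - ∫ b, G (a, b) ∂ρ) ^ 2) ∂(Measure.pi fun _ : ι => ρ) ∂μ :=
        lintegral_lintegral_swap hΦ.aemeasurable
    _ ≤ ∫⁻ a, ENNReal.ofReal (Fintype.card ι : ℝ)⁻¹
          * ∫⁻ b, ENNReal.ofReal ((G (a, b) - c) ^ 2) ∂ρ ∂μ :=
        lintegral_mono_ae (hslice.mono fun a ha => lintegral_sq_sampleMean_sub_le ha c)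
    _ = _ := by
        have hsq : Measurable fun q => ENNReal.ofReal ((G q - c) ^ 2) := by fun_prop
        rw [lintegral_const_mul _ hsq.lintegral_prod_right', lintegral_prod _ hsq.aemeasurable]

variable (ρ) in
lemma exists_integral_sq_sampleMean_sub_le [Nonempty ι] (μ : Measure α) [IsFiniteMeasure μ]
    (hG : Measurable G) (hG2 : MemLp G 2 (μ.prod ρ)) :
    ∃ v : ι → β, ∫ a, (sampleMean (fun b => G (a, b)) v - ∫ b, G (a, b) ∂ρ) ^ 2 ∂μ
      ≤ (Fintype.card ι : ℝ)⁻¹ * Var[G; μ.prod ρ] := by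
  have hslice : ∀ᵐ a ∂μ, MemLp (fun b => G (a, b)) 2 ρ := by
    filter_upwards [hG2.integrable_sq.prod_right_ae] with a ha
    exact (memLp_two_iff_integrable_sq (hG.comp measurable_prodMk_left).aestronglyMeasurable).2 ha
  obtain ⟨v, hv⟩ :=
    exists_lintegral_sq_sampleMean_sub_le (ι := ι) ρ μ hG hslice (∫ q, G q ∂(μ.prod ρ))
  rw [← evariance_eq_lintegral_ofReal] at hv
  refine ⟨v, ?_⟩
  have hmeas := (measurable_sampleMean_sub_integral_sq ρ hG).comp (measurable_prodMk_left (x := v))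
  rw [integral_eq_lintegral_of_nonneg_ae (ae_of_all _ fun _ => sq_nonneg _)
    hmeas.aestronglyMeasurable]
  calc _ ≤ (ENNReal.ofReal (Fintype.card ι : ℝ)⁻¹ * evariance G (μ.prod ρ)).toReal :=
        ENNReal.toReal_mono (ENNReal.mul_ne_top ENNReal.ofReal_ne_top hG2.evariance_ne_top) hv
    _ = _ := by rw [ENNReal.toReal_mul, ENNReal.toReal_ofReal (by positivity), variance]

end ProbabilityTheory

open ProbabilityTheory

/-- Probabilistic construction (Lemma 4): if `X ⟂ Z | H`, so that the density ratio
`g*(x,z)` equals the `p_H`-average of `p_{X|H}(x|h) p_{Z|H}(z|h)/(p_X(x)p_Z(z))`, then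
for every `m ≥ 1` there exist `η : 𝓧 → ℝ^m`, `ψ : 𝓩 → ℝ^m` with
`E[(η(X)ᵀψ(Z̃) - g*(X,Z̃))²] ≤ (1/m)·Var(p_{X|H}(X|H̄)p_{Z|H}(Z̃|H̄)/(p_X(X)p_Z(Z̃)))`
where `(X, Z̃, H̄) ∼ p_X ⊗ p_Z ⊗ p_H` are mutually independent. -/
theorem stmt6 {𝓧 𝓩 𝓗 : Type*} [MeasurableSpace 𝓧] [MeasurableSpace 𝓩] [MeasurableSpace 𝓗]
    (μX : Measure 𝓧) (νZ : Measure 𝓩) (ρ : Measure 𝓗)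
    [IsProbabilityMeasure μX] [IsProbabilityMeasure νZ] [IsProbabilityMeasure ρ]
    (pX : 𝓧 → ℝ) (pZ : 𝓩 → ℝ) (pXH : 𝓗 → 𝓧 → ℝ) (pZH : 𝓗 → 𝓩 → ℝ)
    (hmeas : Measurable fun q : 𝓧 × 𝓩 × 𝓗 =>
      pXH q.2.2 q.1 * pZH q.2.2 q.2.1 / (pX q.1 * pZ q.2.1))
    (g : 𝓧 → 𝓩 → ℝ)
    (hg : ∀ x z, g x z = ∫ h, pXH h x * pZH h z / (pX x * pZ z) ∂ρ)
    (hL2 : MemLp (fun q : 𝓧 × 𝓩 × 𝓗 =>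
      pXH q.2.2 q.1 * pZH q.2.2 q.2.1 / (pX q.1 * pZ q.2.1)) 2 (μX.prod (νZ.prod ρ)))
    (m : ℕ) (hm : 1 ≤ m) :
    ∃ (η : 𝓧 → Fin m → ℝ) (ψ : 𝓩 → Fin m → ℝ),
      ∫ p, (∑ i, η p.1 i * ψ p.2 i - g p.1 p.2) ^ 2 ∂(μX.prod νZ)
        ≤ (1 / m) * variance (fun q : 𝓧 × 𝓩 × 𝓗 =>
            pXH q.2.2 q.1 * pZH q.2.2 q.2.1 / (pX q.1 * pZ q.2.1)) (μX.prod (νZ.prod ρ)) := by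
  have : Nonempty (Fin m) := ⟨⟨0, hm⟩⟩
  have hassoc := measurePreserving_prodAssoc μX νZ ρ
  set G : (𝓧 × 𝓩) × 𝓗 → ℝ := fun q => pXH q.2 q.1.1 * pZH q.2 q.1.2 / (pX q.1.1 * pZ q.1.2)
  have hvar : Var[G; (μX.prod νZ).prod ρ] = Var[fun q : 𝓧 × 𝓩 × 𝓗 =>
      pXH q.2.2 q.1 * pZH q.2.2 q.2.1 / (pX q.1 * pZ q.2.1); μX.prod (νZ.prod ρ)] := by
    rw [← hassoc.variance_fun_comp hmeas.aemeasurable]; rfl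
  have hGm : Measurable G := hmeas.comp hassoc.measurable
  have hG2 : MemLp G 2 ((μX.prod νZ).prod ρ) := hL2.comp_measurePreserving hassoc
  obtain ⟨v, hv⟩ := exists_integral_sq_sampleMean_sub_le (ι := Fin m) ρ (μX.prod νZ) hGm hG2
  refine ⟨fun x i => pXH (v i) x / (pX x * m), fun z i => pZH (v i) z / pZ z, ?_⟩
  rw [Fintype.card_fin, hvar, ← one_div] at hv
  convert hv using 3 with p
  simp only [sampleMean, G, hg, Fintype.card_fin, Finset.mul_sum]
  congr 2
  exact Finset.sum_congr rfl fun i _ => by ring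
end

section
/- In the discrete hidden-variable setting where g*(x,z) = η*(x)ᵀψ*(z) with η*(x) = (P(H=h|X=x))_h and ψ*(z) = (p_{Z|H}(z|h)/p_Z(z))_h, the weight vector w = E[ψ*(Z) E[Y|Z]] satisfies wᵀη*(x) = μ(x) for all x, where μ(x) = E[E[Y|Z] | X=x]. -/
open MeasureTheory

theorem integral_finsetSum_const_mul {α ι 𝕜 : Type*} [RCLike 𝕜] [MeasurableSpace α]
    {μ : Measure α} (s : Finset ι) (c : ι → 𝕜) {f : ι → α → 𝕜} (hf : ∀ i ∈ s, Integrable (f i) μ) :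
    ∫ a, ∑ i ∈ s, c i * f i a ∂μ = ∑ i ∈ s, c i * ∫ a, f i a ∂μ := by
  rw [integral_finsetSum s fun i hi => (hf i hi).const_mul (c i)]
  simp only [integral_const_mul]

theorem stmt8_general {𝓧 𝓩 S : Type*} [Fintype S] [MeasurableSpace 𝓩]
    (ν : Measure 𝓩)
    (η : 𝓧 → S → ℝ) (ψ : 𝓩 → S → ℝ) (g : 𝓧 → 𝓩 → ℝ)
    (r : 𝓩 → ℝ)  -- `r z = E[Y | Z = z]`
    (hfact : ∀ x z, g x z = ∑ h, η x h * ψ z h)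
    (hint : ∀ h : S, Integrable (fun z => ψ z h * r z) ν)
    (w : S → ℝ) (hw : ∀ h, w h = ∫ z, ψ z h * r z ∂ν)
    (μfun : 𝓧 → ℝ) (hμ : ∀ x, μfun x = ∫ z, r z * g x z ∂ν) :
    ∀ x, ∑ h, w h * η x h = μfun x := by
  intro x
  have hexpand : (fun z => r z * g x z) = fun z => ∑ h, η x h * (ψ z h * r z) := by
    funext z
    rw [hfact, Finset.mul_sum]
    exact Finset.sum_congr rfl fun h _ => by ring
  rw [hμ, hexpand, integral_finsetSum_const_mul _ _ fun h _ => hint h]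
  exact Finset.sum_congr rfl fun h _ => by rw [hw, mul_comm]

/-- Discrete hidden variable linear reproduction: if `g*(x,z) = η*(x)ᵀψ*(z)` (finite
index set `S`), then `w = E[ψ*(Z) E[Y|Z]]` satisfies `wᵀη*(x) = μ(x)` for all `x`,
where `μ(x) = ∫ E[Y|Z=z] g*(x,z) p_Z(dz)`. -/
theorem stmt8 {𝓧 𝓩 S : Type*} [Fintype S] [MeasurableSpace 𝓩]
    (ν : Measure 𝓩) [IsProbabilityMeasure ν]
    (η : 𝓧 → S → ℝ) (ψ : 𝓩 → S → ℝ) (g : 𝓧 → 𝓩 → ℝ)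
    (r : 𝓩 → ℝ)  -- `r z = E[Y | Z = z]`
    (hfact : ∀ x z, g x z = ∑ h, η x h * ψ z h)
    (hint : ∀ h : S, Integrable (fun z => ψ z h * r z) ν)
    (w : S → ℝ) (hw : ∀ h, w h = ∫ z, ψ z h * r z ∂ν)
    (μfun : 𝓧 → ℝ) (hμ : ∀ x, μfun x = ∫ z, r z * g x z ∂ν) :
    ∀ x, ∑ h, w h * η x h = μfun x :=
  stmt8_general ν η ψ g r hfact hint w hw μfun hμ
end

section
/- In the Gaussian model with H ∼ N(0,σ²), X|H ∼ N(H,1), Z|H ∼ N(H,1), X ⟂ Z | H, and σ² < 1/2, one has E[(p_{X|H}(X|H̄) p_{Z|H}(Z̃|H̄)/(p_X(X) p_Z(Z̃)))²] = (1+σ²)²/√(1-4σ⁴), where (X, Z̃, H̄) ∼ p_X ⊗ p_Z ⊗ p_H are mutually independent. -/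
/-!
After substituting the densities, the integrand is a constant times `exp (-Q (x, z, h))` for a
quadratic form `Q`. Completing the square in `h` leaves `exp (-(α x² - 2 β x z + α z²))` with
`α² - β² = (1 - 4s²) / (4 (1 + s)² (4s + 1))`, which is positive exactly when `s < 1/2`; completing
the square in `z` and then in `x` gives the two-dimensional Gaussian integral `π / √(α² - β²)`.
-/

open MeasureTheory Real ProbabilityTheory
open scoped NNReal

lemma integral_exp_neg_mul_sq_add_mul_add {a : ℝ} (ha : 0 < a) (b d : ℝ) :
    ∫ x : ℝ, exp (-(a * x ^ 2) + b * x + d) = √(π / a) * exp (b ^ 2 / (4 * a) + d) := by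
  have hsq (x : ℝ) :
      -(a * x ^ 2) + b * x + d = -a * (x - b / (2 * a)) ^ 2 + (b ^ 2 / (4 * a) + d) := by
    field_simp
    ring
  simp_rw [hsq, exp_add]
  rw [integral_mul_const, integral_sub_right_eq_self (fun x => exp (-a * x ^ 2)),
    integral_gaussian]

lemma integral_integral_exp_neg_quadratic_form {a b c : ℝ} (hc : 0 < c) (hdet : b ^ 2 < a * c) :
    ∫ x : ℝ, ∫ z : ℝ, exp (-(a * x ^ 2 - 2 * b * x * z + c * z ^ 2)) = π / √(a * c - b ^ 2) := by
  have hschur : 0 < a - b ^ 2 / c := by rwa [sub_pos, div_lt_iff₀ hc]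
  have hinner (x : ℝ) : ∫ z : ℝ, exp (-(a * x ^ 2 - 2 * b * x * z + c * z ^ 2))
      = √(π / c) * exp (-((a - b ^ 2 / c) * x ^ 2) + 0 * x + 0) := by
    have hexp (z : ℝ) : -(a * x ^ 2 - 2 * b * x * z + c * z ^ 2)
        = -(c * z ^ 2) + 2 * b * x * z + -(a * x ^ 2) := by ring
    simp_rw [hexp, integral_exp_neg_mul_sq_add_mul_add hc]
    congr 2
    field_simp
    ring
  simp_rw [hinner, integral_const_mul, integral_exp_neg_mul_sq_add_mul_add hschur]
  have hdet' : 0 < a * c - b ^ 2 := by linarith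
  rw [zero_pow two_ne_zero, zero_div, add_zero, exp_zero, mul_one,
    ← sq_eq_sq₀ (by positivity) (by positivity), mul_pow, div_pow,
    sq_sqrt (by positivity), sq_sqrt (by positivity), sq_sqrt hdet'.le]
  field_simp

lemma sq_likelihood_ratio_mul_prior {s : ℝ≥0} (hs : 0 < s) (x z h : ℝ) :
    (gaussianPDFReal h 1 x * gaussianPDFReal h 1 z
        / (gaussianPDFReal 0 (1 + s) x * gaussianPDFReal 0 (1 + s) z)) ^ 2
      * gaussianPDFReal 0 (1 + s) x * gaussianPDFReal 0 (1 + s) z * gaussianPDFReal 0 s h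
      = (1 + s) / (2 * π * √(2 * π * s))
        * exp (-((4 * s + 1) / (2 * s) * h ^ 2) + 2 * (x + z) * h
          + -((1 + 2 * s) / (2 * (1 + s)) * (x ^ 2 + z ^ 2))) := by
  have hs' : (0 : ℝ) < s := hs
  have hexp : exp (-((4 * s + 1) / (2 * s) * h ^ 2) + 2 * (x + z) * h
          + -((1 + 2 * s) / (2 * (1 + s)) * (x ^ 2 + z ^ 2)))
      = exp (-(x - h) ^ 2 / 2) ^ 2 * exp (-(z - h) ^ 2 / 2) ^ 2 * exp (-(h - 0) ^ 2 / (2 * s))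
        / (exp (-(x - 0) ^ 2 / (2 * (1 + s))) * exp (-(z - 0) ^ 2 / (2 * (1 + s)))) := by
    rw [eq_div_iff (by positivity)]
    simp only [sq (exp _), ← exp_add]
    congr 1
    field_simp
    ring
  have h2π : √(2 * π) ^ 2 = 2 * π := sq_sqrt (by positivity)
  have h2π1s : √(2 * π * (1 + s)) ^ 2 = 2 * π * (1 + s) := sq_sqrt (by positivity)
  rw [hexp]
  simp only [gaussianPDFReal, NNReal.coe_one, NNReal.coe_add, mul_one]
  field_simp
  rw [h2π1s, show 4 = 2 * 2 from rfl, pow_mul, h2π]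
  ring

lemma integral_sq_likelihood_ratio_mul_prior {s : ℝ≥0} (hs : 0 < s) (x z : ℝ) :
    ∫ h, (gaussianPDFReal h 1 x * gaussianPDFReal h 1 z
        / (gaussianPDFReal 0 (1 + s) x * gaussianPDFReal 0 (1 + s) z)) ^ 2
      * gaussianPDFReal 0 (1 + s) x * gaussianPDFReal 0 (1 + s) z * gaussianPDFReal 0 s h
      = (1 + s) / (2 * π * √(4 * s + 1))
        * exp (-((4 * s ^ 2 + 2 * s + 1) / (2 * (1 + s) * (4 * s + 1)) * x ^ 2
          - 2 * (2 * s / (4 * s + 1)) * x * z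
          + (4 * s ^ 2 + 2 * s + 1) / (2 * (1 + s) * (4 * s + 1)) * z ^ 2)) := by
  have hs' : (0 : ℝ) < s := hs
  have hA : (0 : ℝ) < (4 * s + 1) / (2 * s) := by positivity
  simp_rw [sq_likelihood_ratio_mul_prior hs, integral_const_mul,
    integral_exp_neg_mul_sq_add_mul_add hA]
  have hsqrt : √(π / ((4 * s + 1) / (2 * s))) = √(2 * π * s) / √(4 * s + 1) := by
    rw [← sqrt_div' _ (by positivity)]
    congr 1
    field_simp
  rw [← mul_assoc, hsqrt]
  congr 1
  · field_simp
  · congr 1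
    field_simp
    ring

/-- Gaussian model: with `s = σ² ∈ (0, 1/2)`, `H ∼ N(0,s)`, `X|H ∼ N(H,1)`, `Z|H ∼ N(H,1)`
(so marginals are `N(0, 1+s)`), and `(X, Z̃, H̄) ∼ p_X ⊗ p_Z ⊗ p_H` independent,
`E[(p_{X|H}(X|H̄) p_{Z|H}(Z̃|H̄)/(p_X(X) p_Z(Z̃)))²] = (1+s)²/√(1-4s²)`. -/
theorem stmt15 (s : ℝ) (hs : 0 < s) (hs2 : s < 1 / 2)
    (pH : ℝ → ℝ)
    (hpH : ∀ h, pH h = (Real.sqrt (2 * π * s))⁻¹ * Real.exp (-(h ^ 2) / (2 * s)))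
    (pX pZ : ℝ → ℝ)
    (hpX : ∀ x, pX x = (Real.sqrt (2 * π * (1 + s)))⁻¹ * Real.exp (-(x ^ 2) / (2 * (1 + s))))
    (hpZ : ∀ z, pZ z = (Real.sqrt (2 * π * (1 + s)))⁻¹ * Real.exp (-(z ^ 2) / (2 * (1 + s))))
    (pcond : ℝ → ℝ → ℝ)  -- `pcond x h` is the `N(h, 1)` density at `x`
    (hpcond : ∀ x h, pcond x h = (Real.sqrt (2 * π))⁻¹ * Real.exp (-((x - h) ^ 2) / 2)) :
    ∫ x, ∫ z, ∫ h, (pcond x h * pcond z h / (pX x * pZ z)) ^ 2 * pX x * pZ z * pH h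
      = (1 + s) ^ 2 / Real.sqrt (1 - 4 * s ^ 2) := by
  lift s to ℝ≥0 using hs.le
  have hcond (x h : ℝ) : pcond x h = gaussianPDFReal h 1 x := by simp [hpcond, gaussianPDFReal]
  have hX (x : ℝ) : pX x = gaussianPDFReal 0 (1 + s) x := by simp [hpX, gaussianPDFReal]
  have hZ (z : ℝ) : pZ z = gaussianPDFReal 0 (1 + s) z := by simp [hpZ, gaussianPDFReal]
  have hH (h : ℝ) : pH h = gaussianPDFReal 0 s h := by simp [hpH, gaussianPDFReal]
  set α : ℝ := (4 * s ^ 2 + 2 * s + 1) / (2 * (1 + s) * (4 * s + 1)) with hα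
  set β : ℝ := 2 * s / (4 * s + 1) with hβ
  have hdet : α * α - β ^ 2 = (1 - 4 * s ^ 2) / ((2 * (1 + s)) ^ 2 * (4 * s + 1)) := by
    rw [hα, hβ]
    field_simp
    ring
  have h14 : 0 < 1 - 4 * (s : ℝ) ^ 2 := by nlinarith
  simp_rw [hcond, hX, hZ, hH, integral_sq_likelihood_ratio_mul_prior (by exact_mod_cast hs),
    integral_const_mul]
  rw [integral_integral_exp_neg_quadratic_form (by positivity)
      (by rw [← sub_pos, hdet]; positivity),
    hdet, sqrt_div' _ (by positivity), sqrt_mul (by positivity), sqrt_sq (by positivity)]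
  field_simp
end

section
/- In the disjoint-support topic model with K topics and symmetric Dirichlet(α) topic weights, E[(p_{X|Θ}(X|Θ̄) p_{Z|Θ}(Z̃|Θ̄)/(p_X(X)p_Z(Z̃)))²] = K³·(E[Θ̄₁⁴] + (K-1)·E[Θ̄₁²Θ̄₂²]), where (X, Z̃, Θ̄) ∼ p_X ⊗ p_Z ⊗ Dirichlet(α·1_K) are mutually independent. -/
/-!
Since `p_X(v) = P v / K`, the likelihood ratio of a pair of words `(v, v')` is
`K² θ_{topic v} θ_{topic v'}`, so the expectation collapses, fibre by fibre over the topics,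
to `K² ∑_{i,j} E[Θ_i² Θ_j²]`. Exchangeability of the topic weights makes `E[Θ_i² Θ_j²]` depend
only on whether `i = j`, which leaves `K` diagonal terms `E[Θ₁⁴]` and `K(K - 1)` off-diagonal
terms `E[Θ₁² Θ₂²]` to sum.
-/

open MeasureTheory

def Exchangeable {ι α : Type*} [MeasurableSpace α] (ρ : Measure (ι → α)) : Prop :=
  ∀ e : Equiv.Perm ι, ρ.map (fun θ => θ ∘ e) = ρ

theorem Exchangeable.integral_comp_perm {ι α E : Type*} [MeasurableSpace α]
    [NormedAddCommGroup E] [NormedSpace ℝ E] {ρ : Measure (ι → α)} (hρ : Exchangeable ρ)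
    (f : (ι → α) → E) (e : Equiv.Perm ι) :
    ∫ θ, f (θ ∘ e) ∂ρ = ∫ θ, f θ ∂ρ := by
  have hemb : MeasurableEmbedding (fun θ : ι → α => θ ∘ e) :=
    (MeasurableEquiv.arrowCongr' e.symm (MeasurableEquiv.refl α)).measurableEmbedding
  rw [← hemb.integral_map, hρ e]

theorem Equiv.Perm.exists_apply_eq_and_apply_eq {α : Type*} [DecidableEq α] {i j i' j' : α}
    (hij : i ≠ j) (hij' : i' ≠ j') : ∃ e : Equiv.Perm α, e i = i' ∧ e j = j' := by
  have hne : i' ≠ Equiv.swap i i' j := by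
    simpa only [Equiv.swap_apply_left] using (Equiv.swap i i').injective.ne hij
  refine ⟨(Equiv.swap i i').trans (Equiv.swap (Equiv.swap i i' j) j'), ?_, ?_⟩
  · simp only [Equiv.trans_apply, Equiv.swap_apply_left]
    exact Equiv.swap_apply_of_ne_of_ne hne hij'
  · simp only [Equiv.trans_apply, Equiv.swap_apply_left]

theorem sum_ite_eq_add_card_sub_one_mul {ι R : Type*} [Fintype ι] [DecidableEq ι] [CommRing R]
    (i : ι) (a b : R) :
    ∑ j, (if i = j then a else b) = a + (Fintype.card ι - 1) * b := by
  calc ∑ j, (if i = j then a else b) = ∑ j, (b + if i = j then a - b else 0) := by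
        congr with j; split_ifs <;> ring
    _ = a + (Fintype.card ι - 1) * b := by
        simp only [Finset.sum_add_distrib, Finset.sum_const, Finset.card_univ, nsmul_eq_mul,
          Finset.sum_ite_eq, Finset.mem_univ, ↓reduceIte]
        ring

theorem sum_mul_comp_eq_sum_of_fiber_sum_eq_one {V ι R : Type*} [Fintype V] [Fintype ι]
    [DecidableEq ι] [CommSemiring R] (topic : V → ι) (P : V → R)
    (hP : ∀ j, ∑ v ∈ Finset.univ.filter fun v => topic v = j, P v = 1) (f : ι → R) :
    ∑ v, P v * f (topic v) = ∑ j, f j := by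
  rw [← Finset.sum_fiberwise Finset.univ topic]
  refine Finset.sum_congr rfl fun j _ => ?_
  calc ∑ v ∈ Finset.univ.filter fun v => topic v = j, P v * f (topic v)
      = ∑ v ∈ Finset.univ.filter fun v => topic v = j, P v * f j :=
        Finset.sum_congr rfl fun v hv => by rw [(Finset.mem_filter.mp hv).2]
    _ = f j := by rw [← Finset.sum_mul, hP j, one_mul]

noncomputable def sqProdMoment {ι : Type*} (ρ : Measure (ι → ℝ)) (i j : ι) : ℝ :=
  ∫ θ, θ i ^ 2 * θ j ^ 2 ∂ρ

theorem Exchangeable.sqProdMoment_apply_perm {ι : Type*} {ρ : Measure (ι → ℝ)}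
    (hρ : Exchangeable ρ) (e : Equiv.Perm ι) (i j : ι) :
    sqProdMoment ρ (e i) (e j) = sqProdMoment ρ i j :=
  hρ.integral_comp_perm (fun θ => θ i ^ 2 * θ j ^ 2) e

theorem Exchangeable.sqProdMoment_eq_ite {ι : Type*} [DecidableEq ι] {ρ : Measure (ι → ℝ)}
    (hρ : Exchangeable ρ) {i₀ i₁ : ι} (h : i₀ ≠ i₁) (i j : ι) :
    sqProdMoment ρ i j = if i = j then sqProdMoment ρ i₀ i₀ else sqProdMoment ρ i₀ i₁ := by
  split_ifs with hij
  · subst hij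
    simpa only [Equiv.swap_apply_left] using hρ.sqProdMoment_apply_perm (Equiv.swap i₀ i) i₀ i₀
  · obtain ⟨e, rfl, rfl⟩ := Equiv.Perm.exists_apply_eq_and_apply_eq h hij
    exact hρ.sqProdMoment_apply_perm e i₀ i₁

theorem div_mul_div_mul_integral_sq_eq_sqProdMoment {ι : Type*} (ρ : Measure (ι → ℝ))
    {K p q : ℝ} (hK : K ≠ 0) (hp : p ≠ 0) (hq : q ≠ 0) (i j : ι) :
    p / K * (q / K) * ∫ θ, ((θ i * p) * (θ j * q) / (p / K * (q / K))) ^ 2 ∂ρ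
      = K ^ 2 * (p * (q * sqProdMoment ρ i j)) := by
  have hratio : (fun θ : ι → ℝ => ((θ i * p) * (θ j * q) / (p / K * (q / K))) ^ 2)
      = fun θ => K ^ 4 * (θ i ^ 2 * θ j ^ 2) := by
    ext θ
    field_simp
  rw [hratio, integral_const_mul, sqProdMoment]
  field_simp

/-- Topic model fourth-moment identity: in the disjoint-support topic model with `K`
topics and exchangeable (e.g. symmetric Dirichlet) topic weights `Θ̄ ∼ ρ` supported on
the simplex, with `(X, Z̃, Θ̄) ∼ p_X ⊗ p_Z ⊗ ρ` independent,
`E[(p_{X|Θ}(X|Θ̄) p_{Z|Θ}(Z̃|Θ̄)/(p_X(X)p_Z(Z̃)))²] = K³ (E[Θ̄₁⁴] + (K-1) E[Θ̄₁²Θ̄₂²])`.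
Here the vocabulary is finite, `topic v` is the unique topic whose distribution gives `v`
positive mass `P v`, `p_X(v) = P v / K`, and `p_{X|Θ}(v|θ) = θ_{topic v} · P v`. -/
theorem stmt16 {V : Type*} [Fintype V] (K : ℕ) (hK : 2 ≤ K)
    (topic : V → Fin K) (P : V → ℝ) (hP : ∀ v, 0 < P v)
    (hPsum : ∀ j : Fin K, ∑ v ∈ Finset.univ.filter fun v => topic v = j, P v = 1)
    (ρ : Measure (Fin K → ℝ))
    (hexch : ∀ e : Equiv.Perm (Fin K), ρ.map (fun θ => θ ∘ e) = ρ)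
    (pX : V → ℝ) (hpX : ∀ v, pX v = P v / K) :
    ∑ v, ∑ v', pX v * pX v' *
        ∫ θ, ((θ (topic v) * P v) * (θ (topic v') * P v') / (pX v * pX v')) ^ 2 ∂ρ
      = (K : ℝ) ^ 3 * ((∫ θ, (θ ⟨0, by omega⟩) ^ 4 ∂ρ)
          + ((K : ℝ) - 1) * ∫ θ, (θ ⟨0, by omega⟩) ^ 2 * (θ ⟨1, by omega⟩) ^ 2 ∂ρ) := by
  have hK0 : (K : ℝ) ≠ 0 := by positivity
  set i₀ : Fin K := ⟨0, by omega⟩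
  set i₁ : Fin K := ⟨1, by omega⟩
  have hM := (show Exchangeable ρ from hexch).sqProdMoment_eq_ite
    (show i₀ ≠ i₁ by simp [i₀, i₁, Fin.ext_iff])
  have hA : sqProdMoment ρ i₀ i₀ = ∫ θ, θ i₀ ^ 4 ∂ρ := by
    simp only [sqProdMoment, ← pow_add]
  have hfiber := sum_mul_comp_eq_sum_of_fiber_sum_eq_one topic P hPsum
  simp only [hpX, div_mul_div_mul_integral_sq_eq_sqProdMoment ρ hK0 (hP _).ne' (hP _).ne']
  calc ∑ v, ∑ v', (K : ℝ) ^ 2 * (P v * (P v' * sqProdMoment ρ (topic v) (topic v')))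
      = (K : ℝ) ^ 2 * ∑ i, ∑ j, sqProdMoment ρ i j := by
        simp only [← Finset.mul_sum, hfiber]
        rw [hfiber fun i => ∑ j, sqProdMoment ρ i j]
    _ = (K : ℝ) ^ 3 * (sqProdMoment ρ i₀ i₀ + ((K : ℝ) - 1) * sqProdMoment ρ i₀ i₁) := by
        simp only [fun i => Fintype.sum_congr _ _ (hM i), sum_ite_eq_add_card_sub_one_mul,
          Fintype.card_fin, Finset.sum_const, Finset.card_univ, nsmul_eq_mul]
        ring
    _ = _ := by rw [hA]; rfl
end

section
/- Transfer landmark embedding: let p and q be two joint distributions of (X,Z,Y) with identical conditionals q_{Z|X} = p_{Z|X}, let g*(x,z) = p_{X,Z}(x,z)/(p_X(x)p_Z(z)), and let Z₁ ∼ q_Z. Then for every x, E_{Z₁∼q_Z}[(p_Z(Z₁)/q_Z(Z₁))·E_q[Y|Z=Z₁]·g*(x,Z₁)] = μ_q(x), where μ_q(x) = E_q[E_q[Y|Z] | X=x]. -/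
open MeasureTheory

theorem integral_div_withDensity_ofReal {α : Type*} [MeasurableSpace α] {μ : Measure α}
    {q : α → ℝ} (hq : AEMeasurable q μ) (hq_pos : ∀ᵐ a ∂μ, 0 < q a) (f : α → ℝ) :
    ∫ a, f a / q a ∂μ.withDensity (fun a => ENNReal.ofReal (q a)) = ∫ a, f a ∂μ := by
  rw [integral_withDensity_eq_integral_toReal_smul₀ hq.ennreal_ofReal
    (ae_of_all _ fun _ => ENNReal.ofReal_lt_top)]
  refine integral_congr_ae ?_
  filter_upwards [hq_pos] with a ha
  rw [ENNReal.toReal_ofReal ha.le, smul_eq_mul, mul_div_cancel₀ _ ha.ne']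

theorem stmt18_general {𝓩 𝓧 : Type*} [MeasurableSpace 𝓩] (lamZ : Measure 𝓩)
    (pZ qZ : 𝓩 → ℝ) (hpZ : ∀ z, 0 < pZ z) (hqZ : ∀ z, 0 < qZ z)
    (hmqZ : Measurable qZ)
    (pcond : 𝓧 → 𝓩 → ℝ)  -- the shared conditional density `p_{Z|X} = q_{Z|X}`
    (r : 𝓩 → ℝ)  -- `r z = E_q[Y | Z = z]`
    (g : 𝓧 → 𝓩 → ℝ) (hg : ∀ x z, g x z = pcond x z / pZ z)
    (μq : 𝓧 → ℝ) (hμq : ∀ x, μq x = ∫ z, r z * pcond x z ∂lamZ)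
    (x : 𝓧) :
    ∫ z, (pZ z / qZ z) * r z * g x z ∂(lamZ.withDensity fun z => ENNReal.ofReal (qZ z))
      = μq x := by
  have hintegrand : ∀ z, (pZ z / qZ z) * r z * g x z = r z * pcond x z / qZ z := fun z => by
    rw [hg]
    field_simp [(hpZ z).ne']
  simp_rw [hintegrand]
  rw [integral_div_withDensity_ofReal hmqZ.aemeasurable (ae_of_all _ hqZ), hμq]

/-- Transfer landmark unbiasedness: if `p` and `q` share the conditional density
`p_{Z|X} = q_{Z|X} = pcond`, `g*(x,z) = p_{Z|X}(z|x)/p_Z(z)`, and `Z₁ ∼ q_Z`, then for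
every `x`, `E_{Z₁∼q_Z}[(p_Z(Z₁)/q_Z(Z₁)) E_q[Y|Z=Z₁] g*(x,Z₁)] = μ_q(x)` where
`μ_q(x) = E_q[E_q[Y|Z] | X=x] = ∫ E_q[Y|Z=z] q_{Z|X}(z|x) dz`. -/
theorem stmt18 {𝓩 𝓧 : Type*} [MeasurableSpace 𝓩] (lamZ : Measure 𝓩)
    (pZ qZ : 𝓩 → ℝ) (hpZ : ∀ z, 0 < pZ z) (hqZ : ∀ z, 0 < qZ z)
    (hmpZ : Measurable pZ) (hmqZ : Measurable qZ)
    (pcond : 𝓧 → 𝓩 → ℝ)  -- the shared conditional density `p_{Z|X} = q_{Z|X}`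
    (r : 𝓩 → ℝ) (hmr : Measurable r)  -- `r z = E_q[Y | Z = z]`
    (hmpc : ∀ x, Measurable (pcond x))
    (g : 𝓧 → 𝓩 → ℝ) (hg : ∀ x z, g x z = pcond x z / pZ z)
    (μq : 𝓧 → ℝ) (hμq : ∀ x, μq x = ∫ z, r z * pcond x z ∂lamZ)
    (x : 𝓧) :
    ∫ z, (pZ z / qZ z) * r z * g x z ∂(lamZ.withDensity fun z => ENNReal.ofReal (qZ z))
      = μq x :=
  stmt18_general lamZ pZ qZ hpZ hqZ hmqZ pcond r g hg μq hμq x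
end
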